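/- arXiv:math/9804089 — 2 statements merged into one kernel-verified Lean document; each statement's English description precedes it below -/
import Mathlib

section
/- Let ũ ≥ 0 be a minimizer of J(u) = (a[u,u] + A‖u‖²_{2q})/‖u‖₂² with ‖ũ‖_{2q} = 1, 1 < q < ∞. Then ũ is a weak eigenfunction: for all w ∈ D[a] ∩ L^{2q}, a[ũ, w] + ∫ Ṽ ũ w dm = λ ∫ ũ w dm, where λ = J(ũ) and Ṽ = A ũ^{2(q-1)}. -/
open MeasureTheory Filter Topology ENNReal

/-- An abstract Dirichlet form `(a, D[a])` on `L²(X, m)`: a symmetric, non-negative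
bilinear form defined on a (dense) subspace of `L²`, satisfying the Markov property. -/
structure DirichletForm (X : Type) [MeasurableSpace X] (μ : Measure X) where
  dom : Set (X → ℝ)
  form : (X → ℝ) → (X → ℝ) → ℝ
  zero_mem : (0 : X → ℝ) ∈ dom
  dom_add : ∀ u ∈ dom, ∀ v ∈ dom, u + v ∈ dom
  dom_smul : ∀ (c : ℝ), ∀ u ∈ dom, c • u ∈ dom
  memL2 : ∀ u ∈ dom, MemLp u 2 μ
  symm : ∀ u v, form u v = form v u
  add_left : ∀ u v w, form (u + v) w = form u w + form v w
  smul_left : ∀ (c : ℝ) (u v), form (c • u) v = c * form u v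
  nonneg : ∀ u, 0 ≤ form u u
  markov : ∀ u ∈ dom, (fun x => min 1 (max (u x) 0)) ∈ dom ∧
    form (fun x => min 1 (max (u x) 0)) (fun x => min 1 (max (u x) 0)) ≤ form u u

/-! Perturb the minimizer along `u + t • w`. The quotient `t ↦ J(u + t • w)` has numerator and
denominator differentiable at `0`: the form and `∫ (u + t w)²` are quadratic in `t`, and
`‖u + t w‖_{2q}² = (∫ ((u + t w)²)^q)^(1/q)` can be differentiated under the integral sign, since
for `|t| ≤ 1` the `t`-derivative of the integrand is dominated by `2q ((|u| + |w|)²)^q`. At the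
local minimum `t = 0` the quotient rule gives `N'(0) D(0) = N(0) D'(0)`, and with `‖u‖_{2q} = 1`
this is twice the weak eigenvalue equation. -/

theorem sq_rpow_eq_abs_rpow (y r : ℝ) : (y ^ 2) ^ r = |y| ^ (2 * r) := by
  rw [← sq_abs, ← Real.rpow_natCast_mul (abs_nonneg y)]
  norm_num

theorem norm_deriv_sq_add_mul_rpow_le {q : ℝ} (hq : 1 ≤ q) {y z t : ℝ} (ht : |t| ≤ 1) :
    ‖q * ((y + t * z) ^ 2) ^ (q - 1) * (2 * (y + t * z) * z)‖ ≤
      2 * q * ((|y| + |z|) ^ 2) ^ q := by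
  set s := |y| + |z|
  have hyz : |y + t * z| ≤ s := by
    calc |y + t * z| ≤ |y| + |t| * |z| := by rw [← abs_mul]; exact abs_add_le _ _
      _ ≤ s := by nlinarith [abs_nonneg z]
  have hz : |z| ≤ s := le_add_of_nonneg_left (abs_nonneg y)
  have hpow : ((y + t * z) ^ 2) ^ (q - 1) ≤ (s ^ 2) ^ (q - 1) :=
    Real.rpow_le_rpow (sq_nonneg _) (sq_le_sq' (abs_le.mp hyz).1 (abs_le.mp hyz).2)
      (by linarith)
  have hlin : |2 * (y + t * z) * z| ≤ 2 * s ^ 2 := by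
    rw [abs_mul, abs_mul, abs_two]
    nlinarith [abs_nonneg (y + t * z), abs_nonneg z]
  calc ‖q * ((y + t * z) ^ 2) ^ (q - 1) * (2 * (y + t * z) * z)‖
      = q * ((y + t * z) ^ 2) ^ (q - 1) * |2 * (y + t * z) * z| := by
        rw [Real.norm_eq_abs, abs_mul, abs_mul, abs_of_nonneg (by linarith : (0:ℝ) ≤ q),
          abs_of_nonneg (Real.rpow_nonneg (sq_nonneg _) _)]
    _ ≤ q * (s ^ 2) ^ (q - 1) * (2 * s ^ 2) := by
        have := Real.rpow_nonneg (sq_nonneg (y + t * z)) (q - 1)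
        gcongr
    _ = 2 * q * (s ^ 2) ^ q := by
        have h := Real.rpow_add_one' (sq_nonneg s) (by linarith : q - 1 + 1 ≠ 0)
        rw [sub_add_cancel] at h
        rw [h]
        ring

theorem IsLocalMin.mul_eq_mul_of_hasDerivAt_div {f g : ℝ → ℝ} {f' g' x : ℝ}
    (hmin : IsLocalMin (fun t => f t / g t) x) (hf : HasDerivAt f f' x) (hg : HasDerivAt g g' x)
    (hgx : g x ≠ 0) : f' * g x = f x * g' := by
  have h := hmin.hasDerivAt_eq_zero (hf.div hg hgx)
  exact sub_eq_zero.mp ((div_eq_zero_iff.mp h).resolve_right (pow_ne_zero 2 hgx))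

section

variable {X : Type*} [MeasurableSpace X] {μ : Measure X}

theorem MeasureTheory.MemLp.integrable_sq_rpow {f : X → ℝ} {q : ℝ} (hq : 0 < q)
    (hf : MemLp f (ENNReal.ofReal (2 * q)) μ) : Integrable (fun x => (f x ^ 2) ^ q) μ := by
  have := hf.integrable_norm_rpow (by simpa using hq) ENNReal.ofReal_ne_top
  rw [ENNReal.toReal_ofReal (by linarith : 0 ≤ 2 * q)] at this
  simpa [sq_rpow_eq_abs_rpow] using this

theorem MeasureTheory.MemLp.eLpNorm_toReal_sq {f : X → ℝ} {q : ℝ} (hq : 0 < q)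
    (hf : MemLp f (ENNReal.ofReal (2 * q)) μ) :
    (eLpNorm f (ENNReal.ofReal (2 * q)) μ).toReal ^ 2 = (∫ x, (f x ^ 2) ^ q ∂μ) ^ q⁻¹ := by
  have h2q : (ENNReal.ofReal (2 * q)).toReal = 2 * q := ENNReal.toReal_ofReal (by linarith)
  have hint : ∫ x, ‖f x‖ ^ (2 * q) ∂μ = ∫ x, (f x ^ 2) ^ q ∂μ := by
    simp only [Real.norm_eq_abs, sq_rpow_eq_abs_rpow]
  have hnn : 0 ≤ ∫ x, (f x ^ 2) ^ q ∂μ := integral_nonneg fun x => by positivity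
  rw [hf.eLpNorm_eq_integral_rpow_norm (by simpa using hq) ENNReal.ofReal_ne_top, h2q, hint,
    ENNReal.toReal_ofReal (by positivity), ← Real.rpow_mul_natCast hnn]
  congr 1
  push_cast
  field_simp

theorem hasDerivAt_integral_sq_add_mul_rpow {q : ℝ} (hq : 1 ≤ q) {u w : X → ℝ}
    (hu : MemLp u (ENNReal.ofReal (2 * q)) μ) (hw : MemLp w (ENNReal.ofReal (2 * q)) μ) :
    HasDerivAt (fun t : ℝ => ∫ x, ((u x + t * w x) ^ 2) ^ q ∂μ)
      (2 * q * ∫ x, (u x ^ 2) ^ (q - 1) * u x * w x ∂μ) 0 := by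
  have hq0 : 0 < q := by linarith
  have hcont : ∀ r : ℝ, 0 ≤ r → Continuous fun y : ℝ => (y ^ 2) ^ r := fun r hr =>
    (continuous_pow 2).rpow_const fun _ => Or.inr hr
  have hmeas : ∀ t : ℝ, AEStronglyMeasurable (fun x => u x + t * w x) μ := fun t =>
    hu.1.add (hw.1.const_mul t)
  have hs : MemLp (fun x => |u x| + |w x|) (ENNReal.ofReal (2 * q)) μ := hu.abs.add hw.abs
  have key := hasDerivAt_integral_of_dominated_loc_of_deriv_le
    (F' := fun t x => q * ((u x + t * w x) ^ 2) ^ (q - 1) * (2 * (u x + t * w x) * w x))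
    (bound := fun x => 2 * q * ((|u x| + |w x|) ^ 2) ^ q)
    (Metric.ball_mem_nhds (0 : ℝ) one_pos)
    (Eventually.of_forall fun t => (hcont q hq0.le).comp_aestronglyMeasurable (hmeas t))
    (by simpa using hu.integrable_sq_rpow hq0)
    ((((hcont _ (by linarith)).comp_aestronglyMeasurable (hmeas 0)).const_mul q).mul
      (((hmeas 0).const_mul 2).mul hw.1))
    (Eventually.of_forall fun x t ht => norm_deriv_sq_add_mul_rpow_le hq
      (by simpa using (Metric.mem_ball.mp ht).le))
    ((hs.integrable_sq_rpow hq0).const_mul _)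
    (Eventually.of_forall fun x t _ => by
      have hlin : HasDerivAt (fun t : ℝ => u x + t * w x) (w x) t := by
        simpa using ((hasDerivAt_id t).mul_const (w x)).const_add (u x)
      refine ((hlin.pow 2).rpow_const (p := q) (Or.inr hq)).congr_deriv ?_
      norm_num only [Pi.pow_apply, pow_one]
      ring)
  refine key.2.congr_deriv ?_
  rw [← integral_const_mul]
  congr 1 with x
  simp only [zero_mul, add_zero]
  ring

theorem hasDerivAt_integral_add_smul_sq {u w : X → ℝ} (hu : MemLp u 2 μ) (hw : MemLp w 2 μ) :
    HasDerivAt (fun t : ℝ => ∫ x, (u + t • w) x ^ 2 ∂μ) (2 * ∫ x, u x * w x ∂μ) 0 := by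
  have h2 : ENNReal.ofReal (2 * 1) = 2 := by norm_num
  have h := hasDerivAt_integral_sq_add_mul_rpow le_rfl (h2 ▸ hu) (h2 ▸ hw)
  simpa using h

theorem hasDerivAt_eLpNorm_add_smul_sq {q : ℝ} (hq : 1 ≤ q) {u w : X → ℝ}
    (hu : MemLp u (ENNReal.ofReal (2 * q)) μ) (hw : MemLp w (ENNReal.ofReal (2 * q)) μ)
    (hu0 : eLpNorm u (ENNReal.ofReal (2 * q)) μ ≠ 0) :
    HasDerivAt (fun t : ℝ => (eLpNorm (u + t • w) (ENNReal.ofReal (2 * q)) μ).toReal ^ 2)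
      (2 * (eLpNorm u (ENNReal.ofReal (2 * q)) μ).toReal ^ (2 - 2 * q) *
        ∫ x, (u x ^ 2) ^ (q - 1) * u x * w x ∂μ) 0 := by
  have hq0 : 0 < q := by linarith
  set H : ℝ → ℝ := fun t => ∫ x, ((u x + t * w x) ^ 2) ^ q ∂μ
  have hH : ∀ t : ℝ,
      (eLpNorm (u + t • w) (ENNReal.ofReal (2 * q)) μ).toReal ^ 2 = H t ^ q⁻¹ := fun t =>
    (hu.add (hw.const_smul t)).eLpNorm_toReal_sq hq0
  have hN : (eLpNorm u (ENNReal.ofReal (2 * q)) μ).toReal ^ 2 = H 0 ^ q⁻¹ := by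
    simpa using hH 0
  have hNpos : 0 < (eLpNorm u (ENNReal.ofReal (2 * q)) μ).toReal :=
    ENNReal.toReal_pos hu0 hu.eLpNorm_ne_top
  have hH0 : H 0 = (eLpNorm u (ENNReal.ofReal (2 * q)) μ).toReal ^ (2 * q) := by
    calc H 0 = (H 0 ^ q⁻¹) ^ q :=
          (Real.rpow_inv_rpow (integral_nonneg fun x => by positivity) hq0.ne').symm
      _ = _ := by rw [← hN, ← Real.rpow_natCast_mul hNpos.le]; norm_num
  have hH' : HasDerivAt H (2 * q * ∫ x, (u x ^ 2) ^ (q - 1) * u x * w x ∂μ) 0 :=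
    hasDerivAt_integral_sq_add_mul_rpow hq hu hw
  simp_rw [hH]
  refine (hH'.rpow_const
    (Or.inl (hH0 ▸ (Real.rpow_pos_of_pos hNpos _).ne'))).congr_deriv ?_
  rw [hH0, ← Real.rpow_mul hNpos.le, show 2 * q * (q⁻¹ - 1) = 2 - 2 * q by field_simp]
  field_simp

theorem integral_sq_eq_zero_iff {f : X → ℝ} (hf : MemLp f 2 μ) :
    ∫ x, f x ^ 2 ∂μ = 0 ↔ f =ᵐ[μ] 0 := by
  rw [integral_eq_zero_iff_of_nonneg (fun x => sq_nonneg (f x)) hf.integrable_sq]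
  refine eventually_congr (Eventually.of_forall fun x => ?_)
  simp

end

namespace DirichletForm

variable {X : Type} [MeasurableSpace X] {μ : Measure X} (a : DirichletForm X μ)

theorem form_add_smul_self (u w : X → ℝ) (t : ℝ) :
    a.form (u + t • w) (u + t • w) = a.form u u + 2 * t * a.form u w + t ^ 2 * a.form w w := by
  have hleft : ∀ f, a.form (u + t • w) f = a.form u f + t * a.form w f := fun f => by
    rw [a.add_left, a.smul_left]
  rw [hleft, a.symm u, a.symm w, hleft, hleft, a.symm w u]
  ring

theorem hasDerivAt_form_add_smul_self (u w : X → ℝ) :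
    HasDerivAt (fun t : ℝ => a.form (u + t • w) (u + t • w)) (2 * a.form u w) 0 := by
  simp_rw [a.form_add_smul_self]
  have hid := hasDerivAt_id (0 : ℝ)
  refine (((hid.const_mul (2 : ℝ)).mul_const (a.form u w)).const_add (a.form u u)).add
    ((hid.pow 2).mul_const (a.form w w)) |>.congr_deriv ?_
  simp

noncomputable def rayleighQuotient (A : ℝ) (p : ℝ≥0∞) (v : X → ℝ) : ℝ :=
  (a.form v v + A * (eLpNorm v p μ).toReal ^ 2) / ∫ x, v x ^ 2 ∂μ

theorem isLocalMin_rayleighQuotient_add_smul {A : ℝ} {p : ℝ≥0∞} {u w : X → ℝ}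
    (hu : u ∈ a.dom) (hw : w ∈ a.dom) (hup : MemLp u p μ) (hwp : MemLp w p μ)
    (hu0 : ∫ x, u x ^ 2 ∂μ ≠ 0)
    (hmin : ∀ v ∈ a.dom, eLpNorm v 2 μ ≠ 0 → MemLp v p μ →
      a.rayleighQuotient A p u ≤ a.rayleighQuotient A p v) :
    IsLocalMin (fun t : ℝ => a.rayleighQuotient A p (u + t • w)) 0 := by
  have hcont : ContinuousAt (fun t : ℝ => ∫ x, (u + t • w) x ^ 2 ∂μ) 0 :=
    (hasDerivAt_integral_add_smul_sq (a.memL2 u hu) (a.memL2 w hw)).continuousAt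
  filter_upwards [hcont.eventually_ne (by simpa using hu0)] with t ht
  have hv : u + t • w ∈ a.dom := a.dom_add u hu _ (a.dom_smul t w hw)
  have hv2 : eLpNorm (u + t • w) 2 μ ≠ 0 := fun h0 =>
    ht (by rwa [integral_sq_eq_zero_iff (a.memL2 _ hv),
      ← eLpNorm_eq_zero_iff (a.memL2 _ hv).1 two_ne_zero])
  simpa using hmin _ hv hv2 (hup.add (hwp.const_smul t))

end DirichletForm

theorem minimizer_is_weak_eigenfunction_general
    {X : Type} [MeasurableSpace X] (μ : Measure X) (a : DirichletForm X μ)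
    (q : ℝ) (hq : 1 < q) (A : ℝ)
    (u : X → ℝ) (hu : u ∈ a.dom) (hupos : ∀ x, 0 ≤ u x)
    (hnorm : eLpNorm u (ENNReal.ofReal (2 * q)) μ = 1)
    (hmin : ∀ v ∈ a.dom, eLpNorm v 2 μ ≠ 0 → MemLp v (ENNReal.ofReal (2 * q)) μ →
      (a.form u u + A * ((eLpNorm u (ENNReal.ofReal (2 * q)) μ).toReal) ^ 2) /
          (∫ x, (u x) ^ 2 ∂μ) ≤
        (a.form v v + A * ((eLpNorm v (ENNReal.ofReal (2 * q)) μ).toReal) ^ 2) /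
          (∫ x, (v x) ^ 2 ∂μ)) :
    ∀ w ∈ a.dom, MemLp w (ENNReal.ofReal (2 * q)) μ →
      a.form u w + ∫ x, (A * (u x) ^ (2 * (q - 1))) * u x * w x ∂μ =
        ((a.form u u + A * ((eLpNorm u (ENNReal.ofReal (2 * q)) μ).toReal) ^ 2) /
            (∫ x, (u x) ^ 2 ∂μ)) * ∫ x, u x * w x ∂μ := by
  intro w hw hwq
  have hu2 : MemLp u 2 μ := a.memL2 u hu
  have huq : MemLp u (ENNReal.ofReal (2 * q)) μ := ⟨hu2.1, by rw [hnorm]; exact one_lt_top⟩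
  have hu0 : ∫ x, u x ^ 2 ∂μ ≠ 0 := fun h0 => by
    simp [eLpNorm_congr_ae ((integral_sq_eq_zero_iff hu2).mp h0)] at hnorm
  have hnum := (a.hasDerivAt_form_add_smul_self u w).add
    ((hasDerivAt_eLpNorm_add_smul_sq hq.le huq hwq (by rw [hnorm]; exact one_ne_zero)).const_mul A)
  have hden := hasDerivAt_integral_add_smul_sq hu2 (a.memL2 w hw)
  have hcrit := (a.isLocalMin_rayleighQuotient_add_smul hu hw huq hwq hu0 hmin
    ).mul_eq_mul_of_hasDerivAt_div hnum hden (by simpa using hu0)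
  -- `u ≥ 0` is what identifies `(u²)^(q-1)` with the real power `u^(2(q-1))` of the statement.
  have hV : ∫ x, (A * u x ^ (2 * (q - 1))) * u x * w x ∂μ =
      A * ∫ x, (u x ^ 2) ^ (q - 1) * u x * w x ∂μ := by
    rw [← integral_const_mul]
    congr 1 with x
    rw [← Real.rpow_natCast_mul (hupos x)]
    push_cast
    ring
  simp only [hnorm, ENNReal.toReal_one, Real.one_rpow, zero_smul, add_zero] at hcrit
  rw [hnorm, ENNReal.toReal_one, hV, div_mul_eq_mul_div, eq_div_iff hu0]
  linear_combination hcrit / 2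

/-- Euler–Lagrange equation: a non-negative minimizer `ũ` of `J` with `‖ũ‖_{2q} = 1`
is a weak eigenfunction of `L + Ṽ` with `Ṽ = A ũ^{2(q-1)}` and eigenvalue `λ = J(ũ)`. -/
theorem minimizer_is_weak_eigenfunction
    {X : Type} [MeasurableSpace X] (μ : Measure X) (a : DirichletForm X μ)
    (q : ℝ) (hq : 1 < q) (A : ℝ) (hA : 0 < A)
    (u : X → ℝ) (hu : u ∈ a.dom) (hupos : ∀ x, 0 ≤ u x)
    (hnorm : eLpNorm u (ENNReal.ofReal (2 * q)) μ = 1)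
    (hmin : ∀ v ∈ a.dom, eLpNorm v 2 μ ≠ 0 → MemLp v (ENNReal.ofReal (2 * q)) μ →
      (a.form u u + A * ((eLpNorm u (ENNReal.ofReal (2 * q)) μ).toReal) ^ 2) /
          (∫ x, (u x) ^ 2 ∂μ) ≤
        (a.form v v + A * ((eLpNorm v (ENNReal.ofReal (2 * q)) μ).toReal) ^ 2) /
          (∫ x, (v x) ^ 2 ∂μ)) :
    ∀ w ∈ a.dom, MemLp w (ENNReal.ofReal (2 * q)) μ →
      a.form u w + ∫ x, (A * (u x) ^ (2 * (q - 1))) * u x * w x ∂μ =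
        ((a.form u u + A * ((eLpNorm u (ENNReal.ofReal (2 * q)) μ).toReal) ^ 2) /
            (∫ x, (u x) ^ 2 ∂μ)) * ∫ x, u x * w x ∂μ :=
  minimizer_is_weak_eigenfunction_general μ a q hq A u hu hupos hnorm hmin
end

section
/- Let (a, D[a]) be a strongly local Dirichlet form (satisfying compact embedding, Urysohn property, and continuous core) and suppose, in the setting of the p = 1 problem, ũ is a non-negative minimizer of J with ‖ũ‖_∞ = 1, λ = J(ũ), and ũ satisfies a[ũ, v] + λ∫_I ũ v dm = λ∫ ũ v dm for all v ∈ D[a], where I = {ũ = 1}. Then m(I) > 0 and A = λ m(I). -/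
open MeasureTheory Filter Topology ENNReal

/-!
Testing the Euler–Lagrange equation with `v = ũ` and using `ũ = 1` on `I` gives
`a[ũ,ũ] + λ m(I) = λ ‖ũ‖₂²`, while `λ = J(ũ)` and `‖ũ‖_∞ = 1` give `λ ‖ũ‖₂² = a[ũ,ũ] + A`.
Hence `A = λ m(I)`, and `m(I) > 0` because `A > 0`.
-/

namespace MeasureTheory

variable {α : Type*} [MeasurableSpace α] {μ : Measure α}

theorem MemLp.measure_setOf_eq_lt_top {E : Type*} [NormedAddCommGroup E] {p : ℝ≥0∞}
    {f : α → E} (hf : MemLp f p μ) (hp0 : p ≠ 0) (hp : p ≠ ⊤) {c : E} (hc : c ≠ 0) :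
    μ {x | f x = c} < ⊤ := by
  refine (measure_mono fun x (hx : f x = c) => ?_).trans_lt
    (hf.meas_ge_lt_top hp0 hp (nnnorm_ne_zero_iff.mpr hc))
  simp [hx]

theorem MemLp.integral_sq_pos {f : α → ℝ} (hf : MemLp f 2 μ) (hf0 : eLpNorm f 2 μ ≠ 0) :
    0 < ∫ x, f x ^ 2 ∂μ := by
  refine (integral_nonneg fun x => sq_nonneg (f x)).lt_of_ne' fun h => hf0 ?_
  have hsq : (fun x => f x ^ 2) =ᵐ[μ] 0 :=
    (integral_eq_zero_iff_of_nonneg (fun x => sq_nonneg (f x)) hf.integrable_sq).mp h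
  refine (eLpNorm_eq_zero_iff hf.aestronglyMeasurable two_ne_zero).mpr ?_
  filter_upwards [hsq] with x hx
  simpa using hx

theorem setIntegral_mul_self_setOf_eq_one {f : α → ℝ} (hf : AEStronglyMeasurable f μ) :
    ∫ x in {x | f x = 1}, f x * f x ∂μ = μ.real {x | f x = 1} := by
  have hI : NullMeasurableSet {x | f x = 1} μ :=
    hf.aemeasurable.nullMeasurable (measurableSet_singleton 1)
  rw [setIntegral_congr_fun₀ (g := fun _ => 1) hI fun x (hx : f x = 1) => by simp [hx],
    setIntegral_const, smul_eq_mul, mul_one]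

end MeasureTheory

theorem contact_set_positive_measure_general
    {X : Type} [MeasurableSpace X] (μ : Measure X) (a : DirichletForm X μ)
    (A : ℝ) (hA : 0 < A)
    (u : X → ℝ) (hu : u ∈ a.dom)
    (huinf : eLpNorm u ⊤ μ = 1) (hune : eLpNorm u 2 μ ≠ 0)
    (lam : ℝ)
    (hlam : lam = (a.form u u + A * ((eLpNorm u ⊤ μ).toReal) ^ 2) /
      (∫ x, (u x) ^ 2 ∂μ))
    (heq : ∀ v ∈ a.dom,
      a.form u v + lam * ∫ x in {x | u x = 1}, u x * v x ∂μ =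
        lam * ∫ x, u x * v x ∂μ) :
    0 < μ {x | u x = 1} ∧ μ {x | u x = 1} ≠ ⊤ ∧
      A = lam * (μ {x | u x = 1}).toReal := by
  have huL2 := a.memL2 u hu
  have hpos := huL2.integral_sq_pos hune
  have hcontact := heq u hu
  rw [setIntegral_mul_self_setOf_eq_one huL2.aestronglyMeasurable, measureReal_def] at hcontact
  simp only [← sq] at hcontact
  have hlam' : lam * ∫ x, u x ^ 2 ∂μ = a.form u u + A := by
    rw [hlam, huinf, toReal_one, one_pow, mul_one, div_mul_cancel₀ _ hpos.ne']
  have hA_eq : A = lam * (μ {x | u x = 1}).toReal := by linarith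
  exact ⟨pos_iff_ne_zero.mpr fun h0 => hA.ne' (by simpa [h0] using hA_eq),
    (huL2.measure_setOf_eq_lt_top two_ne_zero ofNat_ne_top one_ne_zero).ne, hA_eq⟩

/-- Case `p = 1`: for the minimizer `ũ` of `J` with `‖ũ‖_∞ = 1` satisfying
`a[ũ,v] + λ∫_I ũ v = λ∫ ũ v` for all `v ∈ D[a]` with `I = {ũ = 1}`, the contact set
has positive measure and `A = λ m(I)`. -/
theorem contact_set_positive_measure
    {X : Type} [MeasurableSpace X] (μ : Measure X) (a : DirichletForm X μ)
    (A : ℝ) (hA : 0 < A)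
    (u : X → ℝ) (hu : u ∈ a.dom) (hupos : ∀ x, 0 ≤ u x)
    (huinf : eLpNorm u ⊤ μ = 1) (hune : eLpNorm u 2 μ ≠ 0)
    (hmin : ∀ v ∈ a.dom, eLpNorm v 2 μ ≠ 0 → MemLp v ⊤ μ →
      (a.form u u + A * ((eLpNorm u ⊤ μ).toReal) ^ 2) / (∫ x, (u x) ^ 2 ∂μ) ≤
        (a.form v v + A * ((eLpNorm v ⊤ μ).toReal) ^ 2) / (∫ x, (v x) ^ 2 ∂μ))
    (lam : ℝ)
    (hlam : lam = (a.form u u + A * ((eLpNorm u ⊤ μ).toReal) ^ 2) /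
      (∫ x, (u x) ^ 2 ∂μ))
    (heq : ∀ v ∈ a.dom,
      a.form u v + lam * ∫ x in {x | u x = 1}, u x * v x ∂μ =
        lam * ∫ x, u x * v x ∂μ) :
    0 < μ {x | u x = 1} ∧ μ {x | u x = 1} ≠ ⊤ ∧
      A = lam * (μ {x | u x = 1}).toReal :=
  contact_set_positive_measure_general μ a A hA u hu huinf hune lam hlam heq
end
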